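/- In the adversarial contamination setup with θ* ∈ Δ_s^{k-1} (1 ≤ s ≤ k), for every tolerance level δ ∈ (0,1), with probability at least 1 − δ one has d_TV(X̄_n, θ*) ≤ (s/n)^{1/2} + 2ε + (2 log(1/δ)/n)^{1/2}. -/

import Mathlib

open MeasureTheory ProbabilityTheory

noncomputable section

/-- The probability simplex `Δ^{k-1}` in `ℝ^k`. -/
def simplex (k : ℕ) : Set (Fin k → ℝ) :=
  {v | (∀ j, 0 ≤ v j) ∧ ∑ j, v j = 1}

/-- `v` has at most `s` nonzero coordinates. -/
def sparse {k : ℕ} (s : ℕ) (v : Fin k → ℝ) : Prop :=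
  (Finset.univ.filter fun j => v j ≠ 0).card ≤ s

/-- Total variation distance between two points of the simplex. -/
def dTV {k : ℕ} (u v : Fin k → ℝ) : ℝ := (1 / 2) * ∑ j, |u j - v j|

/-!
Let `S` be the support of `θ`, so `#S ≤ s`. The clean empirical mean `Ȳ` lies in the simplex,
hence `d_TV(Ȳ, θ) = ∑_{j ∈ T} (θ j - Ȳ j)` for `T = {Ȳ < θ}`, and `T ⊆ S` because `Ȳ ≥ 0`.
For each of the at most `2^s` subsets `T ⊆ S`, the masses `∑_{j ∈ T} Y i j` are independent,
`[0, 1]`-valued, with mean `θ(T)`, so by Hoeffding `θ(T) - Ȳ(T) ≥ a` has probability at most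
`exp (-2 n a²)`. With `a = √(s/n) + √(2 log(1/δ)/n)` the union bound gives
`2^s exp (-2 n a²) ≤ δ`. Finally, changing at most `εn` of the `n` sample points moves the
empirical mean by at most `ε` in total variation.
-/

open Real Finset

section TotalVariation

variable {k : ℕ}

theorem dTV_triangle (u v w : Fin k → ℝ) : dTV u w ≤ dTV u v + dTV v w := by
  unfold dTV
  rw [← mul_add, ← sum_add_distrib]
  gcongr with j
  exact abs_sub_le _ _ _

theorem dTV_le_one {u v : Fin k → ℝ} (hu : u ∈ simplex k) (hv : v ∈ simplex k) :
    dTV u v ≤ 1 := by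
  have : ∑ j, |u j - v j| ≤ ∑ j, (u j + v j) :=
    sum_le_sum fun j _ => abs_sub_le_iff.2 ⟨by linarith [hv.1 j], by linarith [hu.1 j]⟩
  rw [sum_add_distrib, hu.2, hv.2] at this
  unfold dTV
  linarith

theorem exists_subset_support_dTV_eq {u v : Fin k → ℝ} (hu : ∀ j, 0 ≤ u j)
    (hsum : ∑ j, u j = ∑ j, v j) :
    ∃ T ⊆ univ.filter (v · ≠ 0), dTV u v = ∑ j ∈ T, (v j - u j) := by
  set T := univ.filter fun j => u j < v j
  refine ⟨T, fun j hj => ?_, ?_⟩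
  · simp only [T, mem_filter, mem_univ, true_and] at hj ⊢
    exact ((hu j).trans_lt hj).ne'
  have habs : ∑ j, |u j - v j| =
      ∑ j ∈ T, (v j - u j) - ∑ j ∈ univ.filter (fun j => ¬ u j < v j), (v j - u j) := by
    rw [← sum_filter_add_sum_filter_not univ (fun j => u j < v j), sub_eq_add_neg,
      ← sum_neg_distrib]
    congr 1 <;> refine sum_congr rfl fun j hj => ?_
    · rw [abs_sub_comm, abs_of_pos (sub_pos.2 (mem_filter.1 hj).2)]
    · rw [abs_of_nonneg (sub_nonneg.2 (not_lt.1 (mem_filter.1 hj).2)), neg_sub]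
  have hzero :
      ∑ j ∈ T, (v j - u j) + ∑ j ∈ univ.filter (fun j => ¬ u j < v j), (v j - u j) = 0 := by
    rw [sum_filter_add_sum_filter_not, sum_sub_distrib, hsum, sub_self]
  unfold dTV
  linarith

theorem sum_mem_Icc_of_mem_simplex {v : Fin k → ℝ} (hv : v ∈ simplex k)
    (T : Finset (Fin k)) : ∑ j ∈ T, v j ∈ Set.Icc 0 1 :=
  ⟨sum_nonneg fun j _ => hv.1 j,
    hv.2 ▸ sum_le_sum_of_subset_of_nonneg (subset_univ T) fun j _ _ => hv.1 j⟩

end TotalVariation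

section SampleMean

variable {n k : ℕ}

def sampleMean (x : Fin n → Fin k → ℝ) : Fin k → ℝ := fun j => (1 / n : ℝ) * ∑ i, x i j

theorem sum_sampleMean (x : Fin n → Fin k → ℝ) (T : Finset (Fin k)) :
    ∑ j ∈ T, sampleMean x j = (1 / n : ℝ) * ∑ i, ∑ j ∈ T, x i j := by
  rw [sum_comm, mul_sum]
  rfl

theorem sampleMean_mem_simplex (hn : 0 < n) {x : Fin n → Fin k → ℝ}
    (hx : ∀ i, x i ∈ simplex k) : sampleMean x ∈ simplex k := by
  refine ⟨fun j => mul_nonneg (by positivity) (sum_nonneg fun i _ => (hx i).1 j), ?_⟩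
  rw [sum_sampleMean]
  simp only [fun i => (hx i).2, sum_const, card_univ, Fintype.card_fin, nsmul_eq_mul, mul_one]
  field_simp

theorem dTV_sampleMean_le (x y : Fin n → Fin k → ℝ) :
    dTV (sampleMean x) (sampleMean y) ≤ (1 / n : ℝ) * ∑ i, dTV (x i) (y i) := by
  unfold dTV sampleMean
  calc _ ≤ 1 / 2 * ∑ j, 1 / n * ∑ i, |x i j - y i j| := by
        gcongr with j
        rw [← mul_sub, ← sum_sub_distrib, abs_mul, abs_of_nonneg (by positivity)]
        gcongr
        exact abs_sum_le_sum_abs _ _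
    _ = _ := by
        rw [← mul_sum, ← mul_sum, sum_comm]
        ring

theorem dTV_sampleMean_le_card {x y : Fin n → Fin k → ℝ} (hx : ∀ i, x i ∈ simplex k)
    (hy : ∀ i, y i ∈ simplex k) :
    dTV (sampleMean x) (sampleMean y) ≤ (1 / n : ℝ) * #(univ.filter fun i => x i ≠ y i) := by
  refine (dTV_sampleMean_le x y).trans (mul_le_mul_of_nonneg_left ?_ (by positivity))
  rw [card_filter, Nat.cast_sum]
  refine sum_le_sum fun i _ => ?_
  split_ifs with h
  · simpa using dTV_le_one (hx i) (hy i)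
  · simp [not_not.1 h, dTV]

end SampleMean

theorem two_pow_mul_exp_le {n : ℕ} (hn : 0 < n) (s : ℕ) {δ : ℝ} (hδ0 : 0 < δ) (hδ1 : δ < 1) :
    2 ^ s * exp (-(2 * n * (√(s / n) + √(2 * log (1 / δ) / n)) ^ 2)) ≤ δ := by
  set L := log (1 / δ)
  have hL : 0 ≤ L := log_nonneg (by rw [le_div_iff₀ hδ0]; linarith)
  have hn' : (0 : ℝ) < n := by exact_mod_cast hn
  have hsq : (s / n + 2 * L / n : ℝ) ≤ (√(s / n) + √(2 * L / n)) ^ 2 := by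
    rw [add_sq, sq_sqrt (by positivity), sq_sqrt (by positivity)]
    nlinarith [mul_nonneg (sqrt_nonneg (s / n : ℝ)) (sqrt_nonneg (2 * L / n))]
  have hexponent : s * log 2 + L ≤ 2 * n * (√(s / n) + √(2 * L / n)) ^ 2 := by
    have h2n : 2 * n * (s / n + 2 * L / n : ℝ) = 2 * s + 4 * L := by field_simp; ring
    nlinarith [log_two_lt_d9, hsq]
  calc 2 ^ s * exp (-(2 * n * (√(s / n) + √(2 * L / n)) ^ 2))
      ≤ exp (s * log 2) * exp (-(s * log 2 + L)) := by
        rw [← rpow_natCast, rpow_def_of_pos two_pos, mul_comm (log 2)]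
        gcongr
    _ = δ := by
        rw [← exp_add, show s * log 2 + -(s * log 2 + L) = log δ by simp [L, log_inv]]
        exact exp_log hδ0

section Probability

variable {Ω : Type*} [MeasurableSpace Ω] {μ : Measure Ω} [IsProbabilityMeasure μ]

theorem measureReal_mean_sub_average_ge_le {n : ℕ} {Z : Fin n → Ω → ℝ}
    (hindep : iIndepFun Z μ) (hmeas : ∀ i, Measurable (Z i)) (hZ : ∀ i ω, Z i ω ∈ Set.Icc 0 1)
    {m : ℝ} (hm : ∀ i, μ[Z i] = m) {t : ℝ} (ht : 0 ≤ t) :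
    μ.real {ω | t ≤ m - (1 / n : ℝ) * ∑ i, Z i ω} ≤ exp (-(2 * n * t ^ 2)) := by
  rcases Nat.eq_zero_or_pos n with rfl | hn
  · simp
  have hn' : (0 : ℝ) < n := by exact_mod_cast hn
  -- Hoeffding's lemma: a range of width one gives the variance proxy `1 / 4`.
  have hsub : ∀ i ∈ univ, HasSubgaussianMGF (fun ω => m - Z i ω) (1 / 4) μ := by
    intro i _
    have := (hasSubgaussianMGF_of_mem_Icc (μ := μ) (hmeas i).aemeasurable
      (ae_of_all _ (hZ i))).neg
    convert this using 2
    · simp [hm i]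
    · norm_num
  have hindep' : iIndepFun (fun i ω => m - Z i ω) μ :=
    hindep.comp (fun _ x => m - x) (fun _ => measurable_const.sub measurable_id)
  convert HasSubgaussianMGF.measure_sum_ge_le_of_iIndepFun hindep' hsub (ε := n * t)
    (by positivity) using 3
  · ext ω
    rw [sum_sub_distrib, sum_const, card_univ, Fintype.card_fin, nsmul_eq_mul,
      ← le_div_iff₀' hn']
    congr! 1
    field_simp
  · rw [sum_const, card_univ, Fintype.card_fin, nsmul_eq_mul]
    push_cast
    field_simp
    ring

theorem measure_sum_sub_sampleMean_ge_le {n k : ℕ} {Y : Fin n → Ω → Fin k → ℝ}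
    (hmeas : ∀ i, Measurable (Y i)) (hindep : iIndepFun Y μ)
    (hval : ∀ i ω, Y i ω ∈ simplex k) {θ : Fin k → ℝ} (hmean : ∀ i j, ∫ ω, Y i ω j ∂μ = θ j)
    (T : Finset (Fin k)) {t : ℝ} (ht : 0 ≤ t) :
    μ {ω | t ≤ ∑ j ∈ T, (θ j - sampleMean (Y · ω) j)} ≤
      ENNReal.ofReal (exp (-(2 * n * t ^ 2))) := by
  have hcoord : ∀ i j, Measurable fun ω => Y i ω j :=
    fun i j => (measurable_pi_apply j).comp (hmeas i)
  have hmass : ∀ i, ∫ ω, ∑ j ∈ T, Y i ω j ∂μ = ∑ j ∈ T, θ j := fun i => by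
    rw [integral_finsetSum T fun j _ => Integrable.of_mem_Icc 0 1 (hcoord i j).aemeasurable
      (ae_of_all _ fun ω => by simpa using sum_mem_Icc_of_mem_simplex (hval i ω) {j})]
    exact sum_congr rfl fun j _ => hmean i j
  have hoeffding := measureReal_mean_sub_average_ge_le
    (hindep.comp (fun _ v => ∑ j ∈ T, v j) fun _ => by fun_prop)
    (fun i => Finset.measurable_sum T fun j _ => hcoord i j)
    (fun i ω => sum_mem_Icc_of_mem_simplex (hval i ω) T) hmass ht
  rw [← ofReal_measureReal]
  refine ENNReal.ofReal_le_ofReal (le_of_eq_of_le ?_ hoeffding)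
  simp only [sum_sub_distrib, sum_sampleMean]
  rfl

theorem ofReal_one_sub_le_measure {A B : Set Ω} {δ : ℝ} (hδ : 0 ≤ δ)
    (hB : μ B ≤ ENNReal.ofReal δ) (hAB : ∀ᵐ ω ∂μ, ω ∉ B → ω ∈ A) :
    ENNReal.ofReal (1 - δ) ≤ μ A :=
  calc ENNReal.ofReal (1 - δ) = 1 - ENNReal.ofReal δ := by
        rw [ENNReal.ofReal_sub _ hδ, ENNReal.ofReal_one]
    _ ≤ 1 - μ B := tsub_le_tsub_left hB 1
    _ ≤ μ Bᶜ := tsub_le_iff_left.2 <| by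
        simpa [measure_univ] using measure_union_le (μ := μ) B Bᶜ
    _ ≤ μ A := measure_mono_ae hAB

end Probability

theorem sample_mean_TV_confidence_general
    {Ω : Type} [MeasurableSpace Ω] (μ : Measure Ω) [IsProbabilityMeasure μ]
    (k s n : ℕ) (hn : 1 ≤ n)
    (ε : ℝ) (hε0 : 0 ≤ ε)
    (Y X : Fin n → Ω → Fin k → ℝ)
    (hYmeas : ∀ i, Measurable (Y i))
    (hYindep : iIndepFun Y μ)
    (hYval : ∀ i ω, Y i ω ∈ simplex k)
    (hXval : ∀ i ω, X i ω ∈ simplex k)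
    (θ : Fin k → ℝ) (hθ : θ ∈ simplex k) (hθsparse : sparse s θ)
    (hθmean : ∀ i j, ∫ ω, Y i ω j ∂μ = θ j)
    (hcontam : ∀ᵐ ω ∂μ,
      ((Finset.univ.filter fun i => X i ω ≠ Y i ω).card : ℝ) ≤ ε * n)
    (δ : ℝ) (hδ0 : 0 < δ) (hδ1 : δ < 1) :
    ENNReal.ofReal (1 - δ) ≤
      μ {ω | dTV (fun j => (1 / n : ℝ) * ∑ i, X i ω j) θ ≤
        Real.sqrt (s / n) + 2 * ε + Real.sqrt (2 * Real.log (1 / δ) / n)} := by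
  set a := √(s / n) + √(2 * log (1 / δ) / n)
  set S := univ.filter (θ · ≠ 0)
  set bad := ⋃ T ∈ S.powerset, {ω | a ≤ ∑ j ∈ T, (θ j - sampleMean (Y · ω) j)}
  have hbad : μ bad ≤ ENNReal.ofReal δ :=
    calc μ bad ≤ ∑ T ∈ S.powerset, ENNReal.ofReal (exp (-(2 * n * a ^ 2))) :=
          (measure_biUnion_finset_le _ _).trans <| sum_le_sum fun T _ =>
            measure_sum_sub_sampleMean_ge_le hYmeas hYindep hYval hθmean T (by positivity)
      _ ≤ ENNReal.ofReal (2 ^ s * exp (-(2 * n * a ^ 2))) := by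
          rw [sum_const, card_powerset, nsmul_eq_mul, ← ENNReal.ofReal_natCast,
            ← ENNReal.ofReal_mul (by positivity)]
          gcongr
          exact_mod_cast Nat.pow_le_pow_right two_pos hθsparse
      _ ≤ ENNReal.ofReal δ := ENNReal.ofReal_le_ofReal (two_pow_mul_exp_le hn s hδ0 hδ1)
  refine ofReal_one_sub_le_measure hδ0.le hbad ?_
  filter_upwards [hcontam] with ω hω hgood
  have hYbar := sampleMean_mem_simplex hn fun i => hYval i ω
  obtain ⟨T, hTS, hT⟩ := exists_subset_support_dTV_eq hYbar.1 (hYbar.2.trans hθ.2.symm)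
  have hdTV_Y : dTV (sampleMean (Y · ω)) θ < a :=
    hT ▸ not_le.1 fun h => hgood (Set.mem_biUnion (mem_powerset.2 hTS) h)
  have hdTV_XY : dTV (sampleMean (X · ω)) (sampleMean (Y · ω)) ≤ ε := by
    refine (dTV_sampleMean_le_card (hXval · ω) (hYval · ω)).trans ?_
    rw [one_div_mul_eq_div, div_le_iff₀ (by positivity)]
    exact hω
  change dTV (sampleMean (X · ω)) θ ≤ _
  linarith [dTV_triangle (sampleMean (X · ω)) (sampleMean (Y · ω)) θ]

/-- In the adversarial contamination setup with `s`-sparse mean, with probability at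
least `1 - δ`, `d_TV(X̄_n, θ*) ≤ (s/n)^{1/2} + 2ε + (2·log(1/δ)/n)^{1/2}`. -/
theorem sample_mean_TV_confidence
    {Ω : Type} [MeasurableSpace Ω] (μ : Measure Ω) [IsProbabilityMeasure μ]
    (k s n : ℕ) (hk : 1 ≤ k) (hs1 : 1 ≤ s) (hsk : s ≤ k) (hn : 1 ≤ n)
    (ε : ℝ) (hε0 : 0 ≤ ε) (hε1 : ε ≤ 1)
    (Y X : Fin n → Ω → Fin k → ℝ)
    (hYmeas : ∀ i, Measurable (Y i)) (hXmeas : ∀ i, Measurable (X i))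
    (hYindep : iIndepFun Y μ)
    (hYid : ∀ i j, IdentDistrib (Y i) (Y j) μ μ)
    (hYval : ∀ i ω, Y i ω ∈ simplex k)
    (hXval : ∀ i ω, X i ω ∈ simplex k)
    (θ : Fin k → ℝ) (hθ : θ ∈ simplex k) (hθsparse : sparse s θ)
    (hθmean : ∀ i j, ∫ ω, Y i ω j ∂μ = θ j)
    (hcontam : ∀ᵐ ω ∂μ,
      ((Finset.univ.filter fun i => X i ω ≠ Y i ω).card : ℝ) ≤ ε * n)
    (δ : ℝ) (hδ0 : 0 < δ) (hδ1 : δ < 1) :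
    ENNReal.ofReal (1 - δ) ≤
      μ {ω | dTV (fun j => (1 / n : ℝ) * ∑ i, X i ω j) θ ≤
        Real.sqrt (s / n) + 2 * ε + Real.sqrt (2 * Real.log (1 / δ) / n)} :=
  sample_mean_TV_confidence_general μ k s n hn ε hε0 Y X hYmeas hYindep hYval hXval θ hθ hθsparse
    hθmean hcontam δ hδ0 hδ1
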